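/- Let Q be a smooth manifold, N ⊂ Q a smooth submanifold, and S: N → ℝ smooth. Then Σ_S = {μ ∈ T*Q | π_Q(μ) ∈ N and ⟨μ, v⟩ = ⟨dS, v⟩ for all v ∈ TN with τ_Q(v) = π_Q(μ)} is a Lagrangian submanifold of T*Q with its canonical symplectic form; in particular dim Σ_S = dim Q. -/

import Mathlib

set_option maxHeartbeats 1000000


open scoped Topology

/-- The set of vectors tangent at `m` to a subset `A` of the cotangent model
`E × (E →L[ℝ] ℝ)`: derivatives at `0` of curves lying in `A` through `m`. -/
def tangentSetAt {E : Type*} [NormedAddCommGroup E] [NormedSpace ℝ E]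
    (A : Set (E × (E →L[ℝ] ℝ))) (m : E × (E →L[ℝ] ℝ)) : Set (E × (E →L[ℝ] ℝ)) :=
  {w | ∃ c : ℝ → E × (E →L[ℝ] ℝ), (∀ t, c t ∈ A) ∧ c 0 = m ∧ HasDerivAt c w 0}

private lemma st_tangent_subset {E : Type*} [NormedAddCommGroup E] [NormedSpace ℝ E]
    [FiniteDimensional ℝ E] (N : Submodule ℝ E) (S : E → ℝ) (hS : ContDiff ℝ (⊤ : ℕ∞) S)
    {m w : E × (E →L[ℝ] ℝ)}
    (hw : w ∈ tangentSetAt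
      {m : E × (E →L[ℝ] ℝ) | m.1 ∈ N ∧ ∀ v ∈ N, m.2 v = fderiv ℝ S m.1 v} m) :
    w.1 ∈ N ∧ ∀ v ∈ N, w.2 v = fderiv ℝ (fun x => fderiv ℝ S x) m.1 w.1 v := by
  obtain ⟨c, hc, hc0, hder⟩ := hw
  have hd1 : HasDerivAt (fun t => (c t).1) w.1 0 :=
    (ContinuousLinearMap.fst ℝ E (E →L[ℝ] ℝ)).hasFDerivAt.comp_hasDerivAt 0 hder
  have hw1 : w.1 ∈ N := by
    have hcl : IsClosed (N : Set E) := N.closed_of_finiteDimensional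
    have h := hasDerivAt_iff_tendsto_slope.1 hd1
    refine hcl.mem_of_tendsto h (Filter.Eventually.of_forall fun t => ?_)
    exact N.smul_mem _ (N.sub_mem (hc t).1 (hc 0).1)
  refine ⟨hw1, fun v hv => ?_⟩
  have hf' : ContDiff ℝ (⊤ : ℕ∞) (fun x => fderiv ℝ S x) := hS.fderiv_right (by simp)
  have hB : HasFDerivAt (fun x => fderiv ℝ S x)
      (fderiv ℝ (fun x => fderiv ℝ S x) m.1) ((c 0).1) := by
    rw [hc0]
    exact (hf'.differentiable (by simp) m.1).hasFDerivAt
  have hd3 : HasDerivAt (fun t => fderiv ℝ S ((c t).1))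
      (fderiv ℝ (fun x => fderiv ℝ S x) m.1 w.1) 0 :=
    hB.comp_hasDerivAt 0 hd1
  have hd4 : HasDerivAt (fun t => fderiv ℝ S ((c t).1) v)
      (fderiv ℝ (fun x => fderiv ℝ S x) m.1 w.1 v) 0 :=
    (ContinuousLinearMap.apply ℝ ℝ v).hasFDerivAt.comp_hasDerivAt 0 hd3
  have hd2 : HasDerivAt (fun t => (c t).2 v) (w.2 v) 0 :=
    (ContinuousLinearMap.apply ℝ ℝ v).hasFDerivAt.comp_hasDerivAt 0
      ((ContinuousLinearMap.snd ℝ E (E →L[ℝ] ℝ)).hasFDerivAt.comp_hasDerivAt 0 hder)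
  have heq : (fun t => (c t).2 v) = fun t => fderiv ℝ S ((c t).1) v :=
    funext fun t => (hc t).2 v hv
  rw [heq] at hd2
  exact hd2.unique hd4

private lemma st_tangent_supset {E : Type*} [NormedAddCommGroup E] [NormedSpace ℝ E]
    [FiniteDimensional ℝ E] (N : Submodule ℝ E) (S : E → ℝ) (hS : ContDiff ℝ (⊤ : ℕ∞) S)
    {m : E × (E →L[ℝ] ℝ)}
    (hm : m.1 ∈ N ∧ ∀ v ∈ N, m.2 v = fderiv ℝ S m.1 v)
    {u : E} {w : E →L[ℝ] ℝ} (hu : u ∈ N)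
    (hw : ∀ v ∈ N, w v = fderiv ℝ (fun x => fderiv ℝ S x) m.1 u v) :
    (u, w) ∈ tangentSetAt
      {m : E × (E →L[ℝ] ℝ) | m.1 ∈ N ∧ ∀ v ∈ N, m.2 v = fderiv ℝ S m.1 v} m := by
  classical
  obtain ⟨N', hN'⟩ := N.exists_isCompl
  set B : E →L[ℝ] E →L[ℝ] ℝ := fderiv ℝ (fun x => fderiv ℝ S x) m.1 with hBdef
  let P : E →L[ℝ] E :=
    LinearMap.toContinuousLinearMap (N.subtype ∘ₗ (N.projectionOnto N' hN'))
  have hP : ∀ x ∈ N, P x = x := by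
    intro x hx
    show (N.subtype (N.projectionOnto N' hN' x) : E) = x
    rw [show x = ((⟨x, hx⟩ : N) : E) from rfl, Submodule.projectionOnto_apply_left hN']
    rfl
  let RR : (E →L[ℝ] ℝ) →L[ℝ] (E →L[ℝ] ℝ) := (ContinuousLinearMap.compL ℝ E E ℝ).flip P
  have hRR : ∀ (A : E →L[ℝ] ℝ) (x : E), RR A x = A (P x) := fun _ _ => rfl
  refine ⟨fun t => (m.1 + t • u,
    m.2 + t • (w - RR (B u)) + (RR (fderiv ℝ S (m.1 + t • u)) - RR (fderiv ℝ S m.1))),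
    ?_, ?_, ?_⟩
  · intro t
    refine ⟨N.add_mem hm.1 (N.smul_mem _ hu), fun v hv => ?_⟩
    simp only [ContinuousLinearMap.add_apply, ContinuousLinearMap.smul_apply,
      ContinuousLinearMap.sub_apply, hRR, smul_eq_mul]
    rw [hP v hv, hw v hv, hm.2 v hv]
    ring
  · simp
  · have h1 : HasDerivAt (fun t : ℝ => m.1 + t • u) u 0 := by
      simpa using ((hasDerivAt_id (0 : ℝ)).smul_const u).const_add m.1
    have hB' : HasFDerivAt (fun x => fderiv ℝ S x) B (m.1 + (0 : ℝ) • u) := by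
      simpa using ((hS.fderiv_right (m := 1) (by exact WithTop.coe_le_coe.2 le_top)).differentiable one_ne_zero m.1).hasFDerivAt
    have h2 : HasDerivAt (fun t : ℝ => fderiv ℝ S (m.1 + t • u)) (B u) 0 :=
      hB'.comp_hasDerivAt 0 h1
    have h3 : HasDerivAt (fun t : ℝ => RR (fderiv ℝ S (m.1 + t • u))) (RR (B u)) 0 :=
      RR.hasFDerivAt.comp_hasDerivAt 0 h2
    have ha : HasDerivAt (fun t : ℝ => m.2 + t • (w - RR (B u))) (w - RR (B u)) 0 := by
      simpa using ((hasDerivAt_id (0 : ℝ)).smul_const (w - RR (B u))).const_add m.2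
    have hb : HasDerivAt
        (fun t : ℝ => RR (fderiv ℝ S (m.1 + t • u)) - RR (fderiv ℝ S m.1)) (RR (B u)) 0 :=
      h3.sub_const _
    have hc := ha.add hb
    have : w - RR (B u) + RR (B u) = w := by abel
    rw [this] at hc
    exact h1.prodMk hc

/-- Śniatycki–Tulczyjew: for a submanifold (here: subspace) `N ⊆ Q = E` and a
smooth `S : N → ℝ` (given as a smooth function on `E`), the set
`Σ_S = {μ ∈ T*Q | π_Q μ ∈ N and ⟨μ,v⟩ = ⟨dS,v⟩ for all v ∈ TN over π_Q μ}` is a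
Lagrangian submanifold of `T*Q = E × E*` with its canonical symplectic form
`ω((u₁,u₂),(v₁,v₂)) = v₂ u₁ - u₂ v₁`: the symplectic form vanishes on tangent
vectors to `Σ_S`, and its (tangent) dimension equals `dim Q`. -/
theorem sniatycki_tulczyjew {E : Type*} [NormedAddCommGroup E] [NormedSpace ℝ E]
    [FiniteDimensional ℝ E] (N : Submodule ℝ E) (S : E → ℝ) (hS : ContDiff ℝ (⊤ : ℕ∞) S)
    (SigS : Set (E × (E →L[ℝ] ℝ)))
    (hSig : SigS = {m | m.1 ∈ N ∧ ∀ v ∈ N, m.2 v = fderiv ℝ S m.1 v}) :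
    (∀ m ∈ SigS, ∀ u ∈ tangentSetAt SigS m, ∀ v ∈ tangentSetAt SigS m,
        v.2 u.1 - u.2 v.1 = 0) ∧
    (∀ m ∈ SigS,
        Module.finrank ℝ (Submodule.span ℝ (tangentSetAt SigS m)) =
          Module.finrank ℝ E) := by
  subst hSig
  constructor
  · rintro m hm u hu v hv
    obtain ⟨hu1, hu2⟩ := st_tangent_subset N S hS hu
    obtain ⟨hv1, hv2⟩ := st_tangent_subset N S hS hv
    rw [hu2 v.1 hv1, hv2 u.1 hu1]
    have hsym := second_derivative_symmetric (f := S) (f' := fun x => fderiv ℝ S x)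
      (fun y => (hS.differentiable (by simp) y).hasFDerivAt)
      (((hS.fderiv_right (m := 1) (by exact WithTop.coe_le_coe.2 le_top)).differentiable one_ne_zero m.1).hasFDerivAt) u.1 v.1
    rw [hsym, sub_self]
  · intro m hm
    classical
    set B : E →L[ℝ] E →L[ℝ] ℝ := fderiv ℝ (fun x => fderiv ℝ S x) m.1 with hBdef
    let T' : Submodule ℝ (E × (E →L[ℝ] ℝ)) :=
      { carrier := {w | w.1 ∈ N ∧ ∀ v ∈ N, w.2 v = B w.1 v}
        add_mem' := fun {a b} ha hb => ⟨N.add_mem ha.1 hb.1, fun v hv => by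
          simp [Prod.fst_add, Prod.snd_add, ContinuousLinearMap.add_apply, map_add,
            ha.2 v hv, hb.2 v hv]⟩
        zero_mem' := ⟨N.zero_mem, fun v hv => by simp⟩
        smul_mem' := fun t a ha => ⟨N.smul_mem t ha.1, fun v hv => by
          simp [Prod.smul_fst, Prod.smul_snd, ContinuousLinearMap.smul_apply, map_smul,
            ha.2 v hv]⟩ }
    have hTS : tangentSetAt
        {m : E × (E →L[ℝ] ℝ) | m.1 ∈ N ∧ ∀ v ∈ N, m.2 v = fderiv ℝ S m.1 v} m
        = (T' : Set (E × (E →L[ℝ] ℝ))) := by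
      ext w
      constructor
      · exact fun hw => st_tangent_subset N S hS hw
      · rintro ⟨h1, h2⟩
        have := st_tangent_supset N S hS hm (u := w.1) (w := w.2) h1 h2
        simpa using this
    rw [hTS, Submodule.span_eq]
    -- dimension count
    obtain ⟨N', hN'⟩ := N.exists_isCompl
    let f : E →L[ℝ] N := LinearMap.toContinuousLinearMap (N.projectionOnto N' hN')
    have hf : ∀ x : N, f (x : E) = x := fun x =>
      Submodule.projectionOnto_apply_left hN' x
    let PE : E →L[ℝ] E := N.subtypeL.comp f
    have hPE : ∀ x ∈ N, PE x = x := fun x hx => congrArg Subtype.val (hf ⟨x, hx⟩)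
    let r : (E →L[ℝ] ℝ) →ₗ[ℝ] (N →L[ℝ] ℝ) :=
      ((ContinuousLinearMap.compL ℝ N E ℝ).flip N.subtypeL).toLinearMap
    have hrsurj : Function.Surjective r := by
      intro g
      refine ⟨g.comp f, ?_⟩
      ext v
      show g (f ((v : N) : E)) = g v
      rw [hf v]
    let Φ : (E × (E →L[ℝ] ℝ)) ≃ₗ[ℝ] (E × (E →L[ℝ] ℝ)) :=
      { toFun := fun x => (x.1, x.2 + (B x.1).comp PE)
        invFun := fun x => (x.1, x.2 - (B x.1).comp PE)
        map_add' := fun a b => by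
          refine Prod.ext rfl ?_
          ext v
          simp only [Prod.fst_add, Prod.snd_add, ContinuousLinearMap.add_apply, map_add,
            ContinuousLinearMap.coe_comp', Function.comp_apply]
          ring
        map_smul' := fun t a => by
          refine Prod.ext rfl ?_
          ext v
          simp only [Prod.smul_fst, Prod.smul_snd, RingHom.id_apply,
            ContinuousLinearMap.add_apply, ContinuousLinearMap.smul_apply, map_smul,
            ContinuousLinearMap.coe_comp', Function.comp_apply, smul_eq_mul]
          ring
        left_inv := fun x => by simp
        right_inv := fun x => by simp }
    have hT' : T' = Submodule.map (Φ : _ →ₗ[ℝ] _) (N.prod (LinearMap.ker r)) := by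
      ext x
      simp only [Submodule.mem_map, Submodule.mem_prod, LinearMap.mem_ker]
      constructor
      · rintro ⟨h1, h2⟩
        refine ⟨(x.1, x.2 - (B x.1).comp PE), ⟨h1, ?_⟩, ?_⟩
        · ext v
          show (x.2 - (B x.1).comp PE) (v : E) = 0
          simp only [ContinuousLinearMap.sub_apply, ContinuousLinearMap.coe_comp',
            Function.comp_apply]
          rw [hPE (v : E) v.2, ← h2 (v : E) v.2, sub_self]
        · show (x.1, x.2 - (B x.1).comp PE + (B x.1).comp PE) = x
          refine Prod.ext rfl ?_
          simp
      · rintro ⟨y, ⟨hy1, hy2⟩, rfl⟩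
        refine ⟨hy1, fun v hv => ?_⟩
        show y.2 v + (B y.1) (PE v) = B y.1 v
        have h3 : y.2 v = 0 := by
          have := congrArg (fun g : N →L[ℝ] ℝ => g (⟨v, hv⟩ : N)) hy2
          exact this
        rw [hPE v hv, h3, zero_add]
    -- finrank of product submodule
    let eP : (N.prod (LinearMap.ker r) : Submodule ℝ (E × (E →L[ℝ] ℝ))) ≃ₗ[ℝ]
        N × (LinearMap.ker r) :=
      { toFun := fun x => (⟨x.1.1, x.2.1⟩, ⟨x.1.2, x.2.2⟩)
        invFun := fun y => ⟨(y.1.1, y.2.1), y.1.2, y.2.2⟩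
        map_add' := fun a b => rfl
        map_smul' := fun t a => rfl
        left_inv := fun x => rfl
        right_inv := fun y => rfl }
    have hCLM : FiniteDimensional ℝ (E →L[ℝ] ℝ) :=
      Module.Finite.equiv (LinearMap.toContinuousLinearMap : (E →ₗ[ℝ] ℝ) ≃ₗ[ℝ] (E →L[ℝ] ℝ))
    have hCLMN : FiniteDimensional ℝ (N →L[ℝ] ℝ) :=
      Module.Finite.equiv (LinearMap.toContinuousLinearMap : (N →ₗ[ℝ] ℝ) ≃ₗ[ℝ] (N →L[ℝ] ℝ))
    have hfE : Module.finrank ℝ (E →L[ℝ] ℝ) = Module.finrank ℝ E := by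
      rw [← (LinearMap.toContinuousLinearMap :
        (E →ₗ[ℝ] ℝ) ≃ₗ[ℝ] (E →L[ℝ] ℝ)).finrank_eq, Module.finrank_linearMap,
        Module.finrank_self, mul_one]
    have hfN : Module.finrank ℝ (N →L[ℝ] ℝ) = Module.finrank ℝ N := by
      rw [← (LinearMap.toContinuousLinearMap :
        (N →ₗ[ℝ] ℝ) ≃ₗ[ℝ] (N →L[ℝ] ℝ)).finrank_eq, Module.finrank_linearMap,
        Module.finrank_self, mul_one]
    have hrank : Module.finrank ℝ (N →L[ℝ] ℝ) + Module.finrank ℝ (LinearMap.ker r)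
        = Module.finrank ℝ (E →L[ℝ] ℝ) := by
      have := LinearMap.finrank_range_add_finrank_ker r
      rwa [LinearMap.range_eq_top.2 hrsurj, finrank_top] at this
    have hker : Module.finrank ℝ (LinearMap.ker r)
        = Module.finrank ℝ E - Module.finrank ℝ N := by
      omega
    have hNle : Module.finrank ℝ N ≤ Module.finrank ℝ E := N.finrank_le
    calc Module.finrank ℝ T'
        = Module.finrank ℝ (Submodule.map (Φ : _ →ₗ[ℝ] _) (N.prod (LinearMap.ker r))) := by rw [hT']
      _ = Module.finrank ℝ (N.prod (LinearMap.ker r)) := by rw [LinearEquiv.finrank_map_eq]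
      _ = Module.finrank ℝ (N × (LinearMap.ker r)) := eP.finrank_eq
      _ = Module.finrank ℝ N + Module.finrank ℝ (LinearMap.ker r) := by
        haveI : Module.Free ℝ (LinearMap.ker r) := Module.Free.of_divisionRing ℝ (LinearMap.ker r)
        exact Module.finrank_prod
      _ = Module.finrank ℝ E := by omega
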